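/- arXiv:2105.09533 — 2 statements merged into one kernel-verified Lean document; each statement's English description precedes it below -/
import Mathlib

section
/- Let P be a probability measure, L an event, and (γ_i)_{i ∈ I} a nonempty countable family of pairwise disjoint events such that P(γ_i) > 0 for every i and P(L | γ_i) > P(L) for every i. Let Γ = ⋃_{i ∈ I} γ_i. Then P(L | Γ) > P(L). (Abstractly: the local probability-raising condition PAC1^loc on each member of a pairwise disjoint cause implies the global probability-raising condition PAC1 for their union.) -/
open MeasureTheory

/-- Conditional probability `P(A | B) = P(A ∩ B) / P(B)` as a real number. -/
noncomputable def condP {Ω : Type*} [MeasurableSpace Ω] (μ : Measure Ω) (A B : Set Ω) : ℝ :=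
  (μ (A ∩ B)).toReal / (μ B).toReal

theorem stmt_4 {Ω : Type*} [MeasurableSpace Ω] (μ : Measure Ω) [IsProbabilityMeasure μ]
    (L : Set Ω) (hL : MeasurableSet L)
    {I : Type*} [Countable I] [Nonempty I]
    (γ : I → Set Ω) (hγm : ∀ i, MeasurableSet (γ i))
    (hdisj : Pairwise fun i j => Disjoint (γ i) (γ j))
    (hpos : ∀ i, 0 < (μ (γ i)).toReal)
    (hloc : ∀ i, condP μ L (γ i) > (μ L).toReal) :
    condP μ L (⋃ i, γ i) > (μ L).toReal := by
  set c : ℝ := (μ L).toReal with hc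
  set a : I → ℝ := fun i => (μ (L ∩ γ i)).toReal with ha
  set b : I → ℝ := fun i => (μ (γ i)).toReal with hb
  have hbne : ∀ i, μ (γ i) ≠ ⊤ := fun i => measure_ne_top μ _
  have hane : ∀ i, μ (L ∩ γ i) ≠ ⊤ := fun i => measure_ne_top μ _
  -- pointwise strict inequality a i > c * b i
  have hkey : ∀ i, c * b i < a i := by
    intro i
    have h := hloc i
    rw [condP, gt_iff_lt, lt_div_iff₀ (hpos i)] at h
    exact h
  -- union measures
  have hΓ : μ (⋃ i, γ i) = ∑' i, μ (γ i) := measure_iUnion hdisj hγm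
  have hLΓ : μ (L ∩ ⋃ i, γ i) = ∑' i, μ (L ∩ γ i) := by
    rw [Set.inter_iUnion]
    exact measure_iUnion (fun i j hij => ((hdisj hij).inter_left' L).inter_right' L)
      (fun i => hL.inter (hγm i))
  have hΓne : (∑' i, μ (γ i)) ≠ ⊤ := hΓ ▸ measure_ne_top μ _
  have hLΓne : (∑' i, μ (L ∩ γ i)) ≠ ⊤ := hLΓ ▸ measure_ne_top μ _
  have hsb : Summable b := ENNReal.summable_toReal hΓne
  have hsa : Summable a := ENNReal.summable_toReal hLΓne
  have hBarr : (μ (⋃ i, γ i)).toReal = ∑' i, b i := by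
    rw [hΓ, ENNReal.tsum_toReal_eq hbne]
  have hAarr : (μ (L ∩ ⋃ i, γ i)).toReal = ∑' i, a i := by
    rw [hLΓ, ENNReal.tsum_toReal_eq hane]
  have hBpos : 0 < ∑' i, b i := by
    obtain ⟨i0⟩ := ‹Nonempty I›
    have : b i0 ≤ ∑' i, b i :=
      Summable.le_tsum hsb i0 (fun j _ => ENNReal.toReal_nonneg)
    exact lt_of_lt_of_le (hpos i0) this
  have hlt : c * ∑' i, b i < ∑' i, a i := by
    obtain ⟨i0⟩ := ‹Nonempty I›
    calc c * ∑' i, b i = ∑' i, c * b i := by rw [tsum_mul_left]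
    _ < ∑' i, a i :=
      Summable.tsum_lt_tsum (fun i => (hkey i).le) (hkey i0) (hsb.mul_left c) hsa
  rw [condP, hAarr, hBarr, gt_iff_lt, lt_div_iff₀ hBpos]
  exact hlt
end

section
/- Let P be a probability measure, L an event, and γ_1, …, γ_k a nonempty finite family of events such that for any two indices i ≠ j the events γ_i and γ_j are either disjoint or one is contained in the other, P(γ_i) > 0 for every i, and P(L | γ_i) > P(L) for every i. Let Γ = γ_1 ∪ … ∪ γ_k. Then P(L | Γ) > P(L). (This is the abstract content of the claim that a local probability-raising cause, given as a set of finite paths whose cylinder sets are pairwise nested or disjoint, is also a global probability-raising cause.) -/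
open MeasureTheory

/-!
The maximal members of a finite laminar family of events are pairwise disjoint and have the same
union as the whole family. So `P(L ∩ Γ)` and `P(Γ)` are sums over these maximal events, and summing
the strict inequalities `P(L) P(γ) < P(L ∩ γ)` over them gives `P(L) P(Γ) < P(L ∩ Γ)`.
-/

def IsLaminar {α : Type*} (𝒯 : Set (Set α)) : Prop :=
  𝒯.Pairwise fun A B => Disjoint A B ∨ A ⊆ B ∨ B ⊆ A

section Laminar

variable {α : Type*} {𝒯 : Set (Set α)}

theorem isLaminar_range {ι : Type*} {γ : ι → Set α}
    (h : ∀ i j, i ≠ j → Disjoint (γ i) (γ j) ∨ γ i ⊆ γ j ∨ γ j ⊆ γ i) :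
    IsLaminar (Set.range γ) := by
  rintro _ ⟨i, rfl⟩ _ ⟨j, rfl⟩ hne
  exact h i j fun hij => hne (congrArg γ hij)

theorem IsLaminar.pairwiseDisjoint_maximal (h𝒯 : IsLaminar 𝒯) :
    {A | Maximal (· ∈ 𝒯) A}.PairwiseDisjoint id := by
  intro A hA B hB hAB
  rcases h𝒯 hA.prop hB.prop hAB with hdisj | hsub | hsub
  · exact hdisj
  · exact absurd (hA.eq_of_subset hB.prop hsub) hAB
  · exact absurd (hB.eq_of_subset hA.prop hsub).symm hAB

theorem Set.Finite.sUnion_setOf_maximal (h𝒯 : 𝒯.Finite) :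
    ⋃₀ {A | Maximal (· ∈ 𝒯) A} = ⋃₀ 𝒯 := by
  refine subset_antisymm (Set.sUnion_mono fun A hA => hA.prop) (Set.sUnion_subset fun A hA => ?_)
  obtain ⟨B, hAB, hB⟩ := h𝒯.exists_le_maximal hA
  exact hAB.trans (Set.subset_sUnion_of_mem hB)

end Laminar

section ConditionalProbability

variable {Ω : Type*} [MeasurableSpace Ω] {μ : Measure Ω} {A B L : Set Ω} {p : ℝ}

theorem lt_condP_iff (hB : 0 < μ.real B) : p < condP μ A B ↔ p * μ.real B < μ.real (A ∩ B) :=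
  lt_div_iff₀ hB

variable [IsFiniteMeasure μ]

theorem lt_condP_of_mul_lt (h : p * μ.real B < μ.real (A ∩ B)) : p < condP μ A B := by
  refine (lt_condP_iff ((measureReal_nonneg).lt_of_ne fun hB => ?_)).2 h
  have : μ.real (A ∩ B) ≤ 0 := hB ▸ measureReal_mono Set.inter_subset_right
  rw [← hB, mul_zero] at h
  linarith

theorem mul_measureReal_sUnion_lt (hL : MeasurableSet L) {𝒮 : Set (Set Ω)} (hfin : 𝒮.Finite)
    (hne : 𝒮.Nonempty) (hd : 𝒮.PairwiseDisjoint id) (hm : ∀ A ∈ 𝒮, MeasurableSet A)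
    (h : ∀ A ∈ 𝒮, p * μ.real A < μ.real (L ∩ A)) :
    p * μ.real (⋃₀ 𝒮) < μ.real (L ∩ ⋃₀ 𝒮) := by
  lift 𝒮 to Finset (Set Ω) using hfin
  have hdL : (𝒮 : Set (Set Ω)).PairwiseDisjoint (L ∩ ·) :=
    hd.mono fun _ => Set.inter_subset_right
  rw [Set.sUnion_eq_biUnion, Finset.set_biUnion_coe, Set.inter_iUnion₂,
    measureReal_biUnion_finset (f := fun A => A) hd hm,
    measureReal_biUnion_finset hdL fun A hA => hL.inter (hm A hA), Finset.mul_sum]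
  exact Finset.sum_lt_sum_of_nonempty (Finset.coe_nonempty.1 hne) h

end ConditionalProbability

theorem stmt_5 {Ω : Type*} [MeasurableSpace Ω] (μ : Measure Ω) [IsProbabilityMeasure μ]
    (L : Set Ω) (hL : MeasurableSet L)
    (k : ℕ) (hk : 0 < k)
    (γ : Fin k → Set Ω) (hγm : ∀ i, MeasurableSet (γ i))
    (hnest : ∀ i j, i ≠ j → Disjoint (γ i) (γ j) ∨ γ i ⊆ γ j ∨ γ j ⊆ γ i)
    (hpos : ∀ i, 0 < (μ (γ i)).toReal)
    (hloc : ∀ i, condP μ L (γ i) > (μ L).toReal) :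
    condP μ L (⋃ i, γ i) > (μ L).toReal := by
  set 𝒮 := {A | Maximal (· ∈ Set.range γ) A}
  have h𝒮 : 𝒮 ⊆ Set.range γ := fun _ hA => hA.prop
  have hne : 𝒮.Nonempty := by
    obtain ⟨A, -, hA⟩ := (Set.finite_range γ).exists_le_maximal (Set.mem_range_self ⟨0, hk⟩)
    exact ⟨A, hA⟩
  have key := mul_measureReal_sUnion_lt hL ((Set.finite_range γ).subset h𝒮) hne
    (isLaminar_range hnest).pairwiseDisjoint_maximal
    (fun A hA => by obtain ⟨i, rfl⟩ := h𝒮 hA; exact hγm i)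
    (fun A hA => by obtain ⟨i, rfl⟩ := h𝒮 hA; exact (lt_condP_iff (hpos i)).1 (hloc i))
  rw [(Set.finite_range γ).sUnion_setOf_maximal, Set.sUnion_range] at key
  exact lt_condP_of_mul_lt key
end
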